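/- arXiv:2006.16180 — 2 statements merged into one kernel-verified Lean document; each statement's English description precedes it below -/
import Mathlib

section
/- Let η = Σ_{k=1}^d (ξ_k - p) x_k with ξ_k i.i.d. Bernoulli(p) and 0 < p ≤ 1/2, and let ζ = η². Then E[ζ²] < 2(1-p)³ ‖x‖⁴ (assuming x ≠ 0). -/
/-!
For independent centred `Y k`, expanding `(S + Y) ^ 4` with `S` independent of `Y` kills the
cross terms of odd degree, so by induction
`E[(∑ Y k) ^ 4] = ∑ E[Y k ^ 4] + 3 ((∑ E[Y k ^ 2]) ^ 2 - ∑ E[Y k ^ 2] ^ 2)`.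
For `Y k = (ξ k - p) x k` this reads `E[η⁴] = a ‖x‖₄⁴ + b (‖x‖⁴ - ‖x‖₄⁴)` with
`a = p (1 - p) (1 - 3p + 3p²)` and `b = 3 p² (1 - p)²`. Both weights are nonnegative and,
for `p ≤ 1/2`, strictly below `2 (1 - p)³`, while `0 ≤ ‖x‖₄⁴ ≤ ‖x‖⁴` and `‖x‖⁴ > 0`.
-/

open MeasureTheory ProbabilityTheory Finset

section

variable {Ω : Type*} [MeasurableSpace Ω] {μ : Measure Ω}

lemma MeasureTheory.MemLp.integrable_pow [IsFiniteMeasure μ] {X : Ω → ℝ} {n : ℕ}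
    (hX : MemLp X n μ) : Integrable (fun ω ↦ X ω ^ n) μ :=
  hX.integrable_norm_pow'.mono' (hX.aestronglyMeasurable.pow n)
    (Filter.Eventually.of_forall fun ω ↦ (norm_pow (X ω) n).le)

variable [IsProbabilityMeasure μ]

lemma integral_comp_of_mem_zero_one {ξ : Ω → ℝ} (hξ : Measurable ξ)
    (hval : ∀ ω, ξ ω = 0 ∨ ξ ω = 1) (f : ℝ → ℝ) :
    ∫ ω, f (ξ ω) ∂μ = (1 - μ.real {ω | ξ ω = 1}) * f 0 + μ.real {ω | ξ ω = 1} * f 1 := by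
  have hA : MeasurableSet {ω | ξ ω = 1} := hξ (measurableSet_singleton 1)
  have hf : ∀ ω, f (ξ ω) = f 0 + {ω | ξ ω = 1}.indicator (fun _ ↦ f 1 - f 0) ω := by
    intro ω
    rcases hval ω with h | h <;> simp [Set.indicator, h]
  simp_rw [hf]
  rw [integral_add (integrable_const _) ((integrable_const _).indicator hA), integral_const,
    integral_indicator_const _ hA]
  simp only [probReal_univ, smul_eq_mul, one_mul]
  ring

lemma ProbabilityTheory.IndepFun.integral_add_pow_four {X Y : Ω → ℝ}
    (hXY : IndepFun X Y μ) (hX : MemLp X 4 μ) (hY : MemLp Y 4 μ)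
    (hX0 : ∫ ω, X ω ∂μ = 0) (hY0 : ∫ ω, Y ω ∂μ = 0) :
    ∫ ω, (X ω + Y ω) ^ 4 ∂μ =
      ∫ ω, X ω ^ 4 ∂μ + 6 * (∫ ω, X ω ^ 2 ∂μ) * (∫ ω, Y ω ^ 2 ∂μ) + ∫ ω, Y ω ^ 4 ∂μ := by
  have hpow : ∀ {Z : Ω → ℝ}, MemLp Z 4 μ → ∀ n ≤ 4, Integrable (fun ω ↦ Z ω ^ n) μ :=
    fun hZ n hn ↦ (hZ.mono_exponent (p := n) (by exact_mod_cast hn)).integrable_pow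
  have hXYpow : ∀ m n, IndepFun (fun ω ↦ X ω ^ m) (fun ω ↦ Y ω ^ n) μ := fun m n ↦
    hXY.comp (measurable_id.pow_const m) (measurable_id.pow_const n)
  have hmixed : ∀ m ∈ range (4 + 1), ∫ ω, X ω ^ m * Y ω ^ (4 - m) ∂μ =
      (∫ ω, X ω ^ m ∂μ) * ∫ ω, Y ω ^ (4 - m) ∂μ := fun m _ ↦
    (hXYpow m (4 - m)).integral_fun_mul_eq_mul_integral
      (hX.aestronglyMeasurable.pow m) (hY.aestronglyMeasurable.pow (4 - m))
  have hint : ∀ m ∈ range (4 + 1),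
      Integrable (fun ω ↦ X ω ^ m * Y ω ^ (4 - m) * (Nat.choose 4 m)) μ := by
    intro m hm
    have hm4 : m ≤ 4 := Nat.lt_succ_iff.mp (mem_range.mp hm)
    exact ((hXYpow m (4 - m)).integrable_mul
      (hpow hX m hm4) (hpow hY (4 - m) (Nat.sub_le 4 m))).mul_const _
  simp_rw [add_pow]
  rw [integral_finsetSum _ hint]
  simp_rw [integral_mul_const]
  rw [sum_congr rfl fun m hm ↦ by rw [hmixed m hm]]
  simp only [sum_range_succ, range_zero, sum_empty, Nat.choose, Nat.reduceSub, pow_zero, pow_one,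
    integral_const, probReal_univ, smul_eq_mul, hX0, hY0]
  ring

namespace ProbabilityTheory.iIndepFun

variable {ι : Type*} {Y : ι → Ω → ℝ}

lemma integral_sum_sq (hY : iIndepFun Y μ) (hmem : ∀ i, MemLp (Y i) 2 μ)
    (hcent : ∀ i, ∫ ω, Y i ω ∂μ = 0) (s : Finset ι) :
    ∫ ω, (∑ i ∈ s, Y i ω) ^ 2 ∂μ = ∑ i ∈ s, ∫ ω, Y i ω ^ 2 ∂μ := by
  have hsum : ∫ ω, (∑ i ∈ s, Y i) ω ∂μ = 0 := by
    simp only [Finset.sum_apply]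
    rw [integral_finsetSum _ fun i _ ↦ (hmem i).integrable one_le_two]
    exact sum_eq_zero fun i _ ↦ hcent i
  have hvar := IndepFun.variance_sum (s := s) (fun i _ ↦ hmem i)
    fun i _ j _ hij ↦ hY.indepFun hij
  rw [variance_of_integral_eq_zero (memLp_finsetSum' s fun i _ ↦ hmem i).aemeasurable hsum]
    at hvar
  simp only [Finset.sum_apply] at hvar
  rw [hvar]
  exact sum_congr rfl fun i _ ↦ variance_of_integral_eq_zero (hmem i).aemeasurable (hcent i)

lemma integral_sum_pow_four (hY : iIndepFun Y μ) (hmem : ∀ i, MemLp (Y i) 4 μ)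
    (hcent : ∀ i, ∫ ω, Y i ω ∂μ = 0) (s : Finset ι) :
    ∫ ω, (∑ i ∈ s, Y i ω) ^ 4 ∂μ = ∑ i ∈ s, ∫ ω, Y i ω ^ 4 ∂μ +
      3 * ((∑ i ∈ s, ∫ ω, Y i ω ^ 2 ∂μ) ^ 2 - ∑ i ∈ s, (∫ ω, Y i ω ^ 2 ∂μ) ^ 2) := by
  classical
  have hmem2 : ∀ i, MemLp (Y i) 2 μ := fun i ↦ (hmem i).mono_exponent (by norm_num)
  induction s using Finset.induction_on with
  | empty => simp
  | insert i s hi ih =>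
    have hS : MemLp (fun ω ↦ ∑ j ∈ s, Y j ω) 4 μ := memLp_finsetSum s fun j _ ↦ hmem j
    have hS0 : ∫ ω, ∑ j ∈ s, Y j ω ∂μ = 0 := by
      rw [integral_finsetSum _ fun j _ ↦ (hmem j).integrable (by norm_num)]
      exact sum_eq_zero fun j _ ↦ hcent j
    have hind : IndepFun (fun ω ↦ ∑ j ∈ s, Y j ω) (Y i) μ := by
      simpa only [← Finset.sum_apply] using
        hY.indepFun_finsetSum_of_notMem₀ (fun j ↦ (hmem j).aemeasurable) hi
    simp only [sum_insert hi]
    simp_rw [add_comm (Y i _)]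
    rw [hind.integral_add_pow_four hS (hmem i) hS0 (hcent i), ih, integral_sum_sq hY hmem2 hcent]
    ring

end ProbabilityTheory.iIndepFun

lemma integral_centered_bernoulli_sum_pow_four {ι : Type*} [Fintype ι]
    {p : ℝ} (hp : 0 ≤ p) {ξ : ι → Ω → ℝ} (hmeas : ∀ k, Measurable (ξ k))
    (hval : ∀ k ω, ξ k ω = 0 ∨ ξ k ω = 1)
    (hdist : ∀ k, μ {ω | ξ k ω = 1} = ENNReal.ofReal p) (hind : iIndepFun ξ μ) (x : ι → ℝ) :
    ∫ ω, (∑ k, (ξ k ω - p) * x k) ^ 4 ∂μ =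
      p * (1 - p) * (1 - 6 * p + 6 * p ^ 2) * ∑ k, x k ^ 4
        + 3 * (p * (1 - p)) ^ 2 * (∑ k, x k ^ 2) ^ 2 := by
  set Y : ι → Ω → ℝ := fun k ω ↦ (ξ k ω - p) * x k
  have hmoment : ∀ k n,
      ∫ ω, Y k ω ^ n ∂μ = ((1 - p) * (-p) ^ n + p * (1 - p) ^ n) * x k ^ n := by
    intro k n
    rw [integral_comp_of_mem_zero_one (hmeas k) (hval k) (fun t ↦ ((t - p) * x k) ^ n),
      measureReal_def, hdist k, ENNReal.toReal_ofReal hp]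
    simp only [zero_sub, mul_pow]
    ring
  have hmem : ∀ k, MemLp (Y k) 4 μ := fun k ↦
    ((memLp_of_bounded (a := 0) (b := 1) (Filter.Eventually.of_forall fun ω ↦ by
        rcases hval k ω with h | h <;> simp [h]) (hmeas k).aestronglyMeasurable 4).sub
      (memLp_const p)).mul_const (x k)
  have hY : iIndepFun Y μ := hind.comp (fun k t ↦ (t - p) * x k) fun k ↦ by fun_prop
  have hcent : ∀ k, ∫ ω, Y k ω ∂μ = 0 := fun k ↦ calc
    ∫ ω, Y k ω ∂μ = ∫ ω, Y k ω ^ 1 ∂μ := by simp only [pow_one]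
    _ = 0 := by rw [hmoment]; ring
  rw [hY.integral_sum_pow_four hmem hcent]
  simp only [hmoment, mul_pow, ← mul_sum, ← pow_mul]
  ring

end

lemma centered_bernoulli_fourth_moment_lt {p S T : ℝ} (hp : 0 < p) (hp' : p ≤ 1 / 2)
    (hS : 0 ≤ S) (hST : S ≤ T) (hT : 0 < T) :
    p * (1 - p) * (1 - 6 * p + 6 * p ^ 2) * S + 3 * (p * (1 - p)) ^ 2 * T
      < 2 * (1 - p) ^ 3 * T := by
  set a := p * (1 - p) * (1 - 3 * p + 3 * p ^ 2)
  set b := 3 * (p * (1 - p)) ^ 2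
  have ha : a < 2 * (1 - p) ^ 3 := by
    -- `2 (1 - p)³ - a = (1 - p) (2 - 5p + 5p² - 3p³)`
    have h : 0 < 2 - 5 * p + 5 * p ^ 2 - 3 * p ^ 3 := by
      nlinarith [mul_nonneg hp.le (sq_nonneg p)]
    nlinarith [mul_pos (by linarith : (0:ℝ) < 1 - p) h]
  have hb : b < 2 * (1 - p) ^ 3 := by
    -- `2 (1 - p)³ - b = (1 - p)² (2 - 2p - 3p²)`
    have h : 0 < 2 - 2 * p - 3 * p ^ 2 := by nlinarith
    nlinarith [mul_pos (pow_pos (by linarith : (0:ℝ) < 1 - p) 2) h]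
  calc p * (1 - p) * (1 - 6 * p + 6 * p ^ 2) * S + b * T = a * S + b * (T - S) := by ring
    _ ≤ max a b * S + max a b * (T - S) := by gcongr <;> first | linarith | simp
    _ = max a b * T := by ring
    _ < 2 * (1 - p) ^ 3 * T := by gcongr; exact max_lt ha hb

/-- `E[ζ²] = E[η⁴] < 2(1-p)³‖x‖⁴` where `η = ∑ k, (ξ k - p) x k`,
`ζ = η²`, `ξ` i.i.d. Bernoulli(p), `0 < p ≤ 1/2`, `x ≠ 0`. -/
theorem bernoulli_zeta_second_moment_bound
    {Ω : Type*} [MeasurableSpace Ω] (μ : Measure Ω) [IsProbabilityMeasure μ]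
    {d : ℕ} (p : ℝ) (hp : 0 < p) (hp' : p ≤ 1 / 2)
    (ξ : Fin d → Ω → ℝ) (hmeas : ∀ k, Measurable (ξ k))
    (hval : ∀ k ω, ξ k ω = 0 ∨ ξ k ω = 1)
    (hdist : ∀ k, μ {ω | ξ k ω = 1} = ENNReal.ofReal p)
    (hind : iIndepFun ξ μ)
    (x : Fin d → ℝ) (hx : x ≠ 0) :
    ∫ ω, ((∑ k, (ξ k ω - p) * x k) ^ 2) ^ 2 ∂μ
      < 2 * (1 - p) ^ 3 * (∑ k, (x k) ^ 2) ^ 2 := by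
  obtain ⟨j, hj⟩ := Function.ne_iff.mp hx
  have hnorm : 0 < ∑ k, x k ^ 2 :=
    sum_pos' (fun i _ ↦ sq_nonneg (x i)) ⟨j, mem_univ j, sq_pos_of_ne_zero hj⟩
  have hnorm4 : ∑ k, x k ^ 4 ≤ (∑ k, x k ^ 2) ^ 2 := by
    simpa only [← pow_mul] using sum_sq_le_sq_sum_of_nonneg fun i _ ↦ sq_nonneg (x i)
  simp_rw [← pow_mul]
  rw [integral_centered_bernoulli_sum_pow_four hp.le hmeas hval hdist hind x]
  exact centered_bernoulli_fourth_moment_lt hp hp' (by positivity) hnorm4 (by positivity)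
end

section
/- Let J be a uniformly random c-element subset of {1,...,d}, x ∈ ℝ^d, q = (1/d)(1 + √((d-c)/(c(d-1)))), y_i = x_i - q s_x, and η = Σ_{j∈J} y_j. Then E[η²] = (c(d-c))/(d(d-1)) · ‖x‖². -/
/-!
Expanding the square, `∑_J (∑_{j ∈ J} y_j)²` is `∑_{i,j} N_{ij} y_i y_j`, where `N_{ij}` counts
the `c`-subsets containing `i` and `j`; it only depends on whether `i = j`, so the second moment is
a combination of `s_y²` and `‖y‖²`. For `y = x - q s_x` both are quadratic in `s_x`, and the
condition `c (d - 1) (d q - 1)² = d - c` on `q` is exactly what makes the `s_x²` terms cancel.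
-/

open Finset

namespace Finset

variable {α ι R : Type*}

-- Multiplied out so that it also covers `c < #s`, where both sides vanish.
theorem card_filter_powersetCard_subset_mul_descFactorial [DecidableEq α] {s u : Finset α}
    (hsu : s ⊆ u) (c : ℕ) :
    #{J ∈ powersetCard c u | s ⊆ J} * (#u).descFactorial #s
      = (#u).choose c * c.descFactorial #s := by
  rcases le_or_gt #s c with hsc | hcs
  · rw [card_filter_powersetCard_subset s u c hsu hsc, Nat.descFactorial_eq_factorial_mul_choose,
      Nat.descFactorial_eq_factorial_mul_choose, mul_left_comm ((#u).choose c), (#u).choose_mul hsc]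
    ring
  · rw [(Nat.descFactorial_eq_zero_iff_lt).2 hcs, mul_zero, mul_eq_zero, card_eq_zero,
      filter_eq_empty_iff]
    refine Or.inl fun J hJ hsJ => ?_
    have := card_le_card hsJ
    rw [(mem_powersetCard.1 hJ).2] at this
    omega

section
variable [Fintype ι] [DecidableEq ι]

theorem card_filter_powersetCard_mem_mem_mul (c : ℕ) (i j : ι) :
    (#{J ∈ powersetCard c (univ : Finset ι) | i ∈ J ∧ j ∈ J} : ℝ)
        * (Fintype.card ι * (Fintype.card ι - 1))
      = (Fintype.card ι).choose c * c
          * (if i = j then (Fintype.card ι : ℝ) - 1 else (c : ℝ) - 1) := by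
  have hpair : {J ∈ powersetCard c (univ : Finset ι) | i ∈ J ∧ j ∈ J}
      = {J ∈ powersetCard c (univ : Finset ι) | {i, j} ⊆ J} := by
    simp only [insert_subset_iff, singleton_subset_iff]
  have key := card_filter_powersetCard_subset_mul_descFactorial (subset_univ ({i, j} : Finset ι)) c
  rw [card_univ, ← hpair] at key
  split_ifs with hij
  · subst hij
    rw [pair_eq_singleton, card_singleton, Nat.descFactorial_one, Nat.descFactorial_one] at key
    rw [← mul_assoc]
    congr 1
    exact_mod_cast key
  · rw [card_pair hij] at key
    have := congrArg (Nat.cast : ℕ → ℝ) key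
    push_cast [Nat.cast_descFactorial_two] at this
    linear_combination this

theorem sum_sq_sum_eq_sum_sum_card_filter_mem [CommSemiring R] (S : Finset (Finset ι))
    (y : ι → R) :
    ∑ J ∈ S, (∑ j ∈ J, y j) ^ 2
      = ∑ i, ∑ j, (#{J ∈ S | i ∈ J ∧ j ∈ J} : R) * (y i * y j) := by
  simp only [natCast_card_filter, sum_mul, ite_mul, one_mul, zero_mul]
  calc ∑ J ∈ S, (∑ j ∈ J, y j) ^ 2
      = ∑ J ∈ S, ∑ i, ∑ j, if i ∈ J ∧ j ∈ J then y i * y j else 0 := by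
        refine sum_congr rfl fun J _ => ?_
        simp only [sq, sum_mul_sum, ite_and, sum_ite_irrel, Fintype.sum_ite_mem, sum_const_zero]
    _ = _ := by
        rw [sum_comm]
        exact sum_congr rfl fun i _ => sum_comm

end

theorem sum_powersetCard_sq_sum_mul [Fintype ι] (c : ℕ) (y : ι → ℝ) :
    (∑ J ∈ powersetCard c (univ : Finset ι), (∑ j ∈ J, y j) ^ 2)
        * (Fintype.card ι * (Fintype.card ι - 1))
      = (Fintype.card ι).choose c * c
          * ((c - 1) * (∑ j, y j) ^ 2 + (Fintype.card ι - c) * ∑ j, y j ^ 2) := by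
  classical
  set d : ℝ := ((Fintype.card ι : ℕ) : ℝ)
  have hdiag (i j : ι) : (if i = j then d - 1 else (c : ℝ) - 1) * (y i * y j)
      = (c - 1) * (y i * y j) + if i = j then (d - c) * y i ^ 2 else 0 := by
    split_ifs with hij
    · subst hij; ring
    · ring
  calc _ = ∑ i, ∑ j, (Fintype.card ι).choose c * c
          * ((if i = j then d - 1 else (c : ℝ) - 1) * (y i * y j)) := by
        simp only [sum_sq_sum_eq_sum_sum_card_filter_mem, sum_mul]
        refine sum_congr rfl fun i _ => sum_congr rfl fun j _ => ?_
        rw [mul_right_comm, card_filter_powersetCard_mem_mem_mul, mul_assoc]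
    _ = _ := by
        simp only [hdiag, mul_add, sum_add_distrib, sum_ite_eq, mem_univ, if_true, ← mul_sum,
          sq, sum_mul_sum]

end Finset

section Debiasing

variable {ι : Type*} [Fintype ι] (x : ι → ℝ) (q : ℝ)

theorem sum_sub_mul_sum :
    ∑ i, (x i - q * ∑ j, x j) = (1 - Fintype.card ι * q) * ∑ j, x j := by
  simp only [sum_sub_distrib, sum_const, card_univ, nsmul_eq_mul]
  ring

theorem sum_sub_mul_sum_sq :
    ∑ i, (x i - q * ∑ j, x j) ^ 2
      = ∑ i, x i ^ 2 - q * (2 - Fintype.card ι * q) * (∑ j, x j) ^ 2 := by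
  simp only [sub_sq, sum_add_distrib, sum_sub_distrib, ← sum_mul, ← mul_sum, sum_const,
    card_univ, nsmul_eq_mul]
  ring

theorem sum_powersetCard_sq_sum_sub_mul_sum {c : ℕ} (hc : c ≤ Fintype.card ι)
    (hd : 2 ≤ Fintype.card ι) {q : ℝ}
    (hq : c * (Fintype.card ι - 1) * (Fintype.card ι * q - 1) ^ 2 = (Fintype.card ι : ℝ) - c) :
    1 / ((Fintype.card ι).choose c : ℝ)
        * ∑ J ∈ powersetCard c (univ : Finset ι), (∑ j ∈ J, (x j - q * ∑ i, x i)) ^ 2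
      = c * (Fintype.card ι - c) / (Fintype.card ι * (Fintype.card ι - 1)) * ∑ j, x j ^ 2 := by
  have h := sum_powersetCard_sq_sum_mul c (fun i => x i - q * ∑ j, x j)
  rw [sum_sub_mul_sum, sum_sub_mul_sum_sq] at h
  have hd2 : (2 : ℝ) ≤ Fintype.card ι := by exact_mod_cast hd
  set d : ℝ := ((Fintype.card ι : ℕ) : ℝ)
  have hd0 : d ≠ 0 := by positivity
  have hd1 : d - 1 ≠ 0 := by linarith
  have hC : ((Fintype.card ι).choose c : ℝ) ≠ 0 := by exact_mod_cast (Nat.choose_pos hc).ne'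
  have hcancel : (c - 1) * (1 - d * q) ^ 2 = (d - c) * (q * (2 - d * q)) := by
    apply mul_left_cancel₀ hd0
    linear_combination hq
  field_simp
  linear_combination h + (Fintype.card ι).choose c * c * (∑ j, x j) ^ 2 * hcancel

end Debiasing

theorem fixed_sparsity_second_moment_general
    {d c : ℕ} (hc : 1 ≤ c) (hcd : 2 * c ≤ d)
    (x : Fin d → ℝ) :
    let sx : ℝ := ∑ j, x j
    let q : ℝ := (1 / d) * (1 + Real.sqrt ((d - c) / (c * (d - 1))))
    let y : Fin d → ℝ := fun i => x i - q * sx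
    (1 / (d.choose c : ℝ)) *
        ∑ J ∈ Finset.powersetCard c (Finset.univ : Finset (Fin d)), (∑ j ∈ J, y j) ^ 2
      = ((c : ℝ) * (d - c)) / (d * (d - 1)) * ∑ j, (x j) ^ 2 := by
  intro sx q y
  have hc_pos : (0 : ℝ) < c := by exact_mod_cast hc
  have hcd' : (c : ℝ) ≤ d := by exact_mod_cast (by omega : c ≤ d)
  have hd1 : (0 : ℝ) < d - 1 := sub_pos.2 (by exact_mod_cast (by omega : 1 < d))
  have ht : 0 ≤ ((d : ℝ) - c) / (c * (d - 1)) := div_nonneg (by linarith) (by positivity)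
  have hq : c * (d - 1) * (d * q - 1) ^ 2 = (d : ℝ) - c := by
    have : (d : ℝ) * q - 1 = √(((d : ℝ) - c) / (c * (d - 1))) := by
      have hd0 : (d : ℝ) ≠ 0 := by linarith
      simp only [q]
      field_simp
      ring
    rw [this, Real.sq_sqrt ht]
    field_simp [hd1.ne']
  have h := sum_powersetCard_sq_sum_sub_mul_sum x (c := c) (q := q) (by simp; omega)
    (by simp; omega) (by simpa only [Fintype.card_fin] using hq)
  simpa only [Fintype.card_fin] using h

/-- With `y i = x i - q s_x`, `q = (1/d)(1 + √((d-c)/(c(d-1))))`, and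
`η = ∑_{j ∈ J} y j` for `J` a uniformly random `c`-subset of `{1,...,d}`,
`E[η²] = (c(d-c))/(d(d-1)) ‖x‖²`. -/
theorem fixed_sparsity_second_moment
    {d c : ℕ} (hc : 1 ≤ c) (hcd : 2 * c ≤ d) (hd : 2 ≤ d)
    (x : Fin d → ℝ) :
    let sx : ℝ := ∑ j, x j
    let q : ℝ := (1 / d) * (1 + Real.sqrt ((d - c) / (c * (d - 1))))
    let y : Fin d → ℝ := fun i => x i - q * sx
    (1 / (d.choose c : ℝ)) *
        ∑ J ∈ Finset.powersetCard c (Finset.univ : Finset (Fin d)), (∑ j ∈ J, y j) ^ 2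
      = ((c : ℝ) * (d - c)) / (d * (d - 1)) * ∑ j, (x j) ^ 2 :=
  fixed_sparsity_second_moment_general hc hcd x
end
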